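/- arXiv:1410.3119 — 2 statements merged into one kernel-verified Lean document; each statement's English description precedes it below -/
import Mathlib

section
/- Remainder form of the hypergraph representation: let α be a real number with α ≠ −1 and 1+α ≠ 0, let S ⊆ ℤ^d, let 0 ≤ k ≤ n and let (ω_0, …, ω_n) be any finite sequence of points of ℤ^d. With F_J defined by F_J = α·∏_{j∈J} 1[ω_j ∈ S] if |J| is odd and F_J = −(α/(1+α))·∏_{j∈J} 1[ω_j ∈ S] if |J| is even, one has (1+α)^{1[{ω_0,…,ω_{k−1}} ∩ S = ∅]·1[{ω_k,…,ω_n} ∩ S ≠ ∅]} = ∏_{J ⊆ {0,…,n}, |J| ≥ 1, J ∩ {k,…,n} ≠ ∅} (1 + F_J). -/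
open scoped BigOperators Classical

noncomputable section

/-- A point of the lattice ℤ^d. -/
abbrev Pt (d : ℕ) := Fin d → ℤ

/-- The hyperedge weight `F_J`: for a nonempty `J ⊆ {0,…,n}`,
`F_J = α·∏_{j∈J} 1[ω_j ∈ S]` if `|J|` is odd and
`F_J = −(α/(1+α))·∏_{j∈J} 1[ω_j ∈ S]` if `|J|` is even. -/
def Fweight {d : ℕ} (α : ℝ) (S : Set (Pt d)) (ω : ℕ → Pt d) (J : Finset ℕ) : ℝ :=
  if Odd J.card then α * ∏ j ∈ J, (if ω j ∈ S then (1 : ℝ) else 0)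
  else -(α / (1 + α)) * ∏ j ∈ J, (if ω j ∈ S then (1 : ℝ) else 0)

/-!
Only the hyperedges `J` inside `T = {j ≤ n : ω_j ∈ S}` contribute, and each such factor is
`(1+α)^{∓1}` according to the parity of `|J|`. Hence the product is `1+α` raised to
`-∑ (-1)^|J|` over the nonempty `J ⊆ T` meeting `{k,…,n}`, and by inclusion–exclusion this
alternating sum is `-1` exactly when `T` is nonempty and lies in `{k,…,n}`, and `0` otherwise.
-/

open Finset

lemma Finset.prod_zpow_eq_zpow_sum₀ {ι G : Type*} [CommGroupWithZero G] {x : G} (hx : x ≠ 0)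
    (s : Finset ι) (f : ι → ℤ) : ∏ i ∈ s, x ^ f i = x ^ ∑ i ∈ s, f i := by
  induction s using Finset.induction with
  | empty => simp
  | insert _ _ h ih => rw [prod_insert h, sum_insert h, ih, zpow_add₀ hx]

lemma Finset.sum_powerset_filter_exists_neg_one_pow_card {ι : Type*} [DecidableEq ι]
    (T : Finset ι) (p : ι → Prop) [DecidablePred p] :
    ∑ J ∈ T.powerset.filter (fun J => ∃ j ∈ J, p j), (-1 : ℤ) ^ #J
      = if T.Nonempty ∧ ∀ j ∈ T, p j then -1 else 0 := by
  have hmiss : T.powerset.filter (fun J => ¬ ∃ j ∈ J, p j) = (T.filter (¬ p ·)).powerset := by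
    ext J
    simp only [mem_filter, mem_powerset, subset_iff, not_exists, not_and]
    exact ⟨fun h j hj => ⟨h.1 hj, h.2 j hj⟩, fun h => ⟨fun j hj => (h hj).1, fun j hj => (h hj).2⟩⟩
  have hsplit := sum_filter_add_sum_filter_not T.powerset (fun J => ∃ j ∈ J, p j)
    (fun J => (-1 : ℤ) ^ #J)
  rw [hmiss, sum_powerset_neg_one_pow_card, sum_powerset_neg_one_pow_card] at hsplit
  have hmiss_empty : T.filter (¬ p ·) = ∅ ↔ ∀ j ∈ T, p j := by simp [filter_eq_empty_iff]
  obtain rfl | hT := T.eq_empty_or_nonempty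
  · simp [filter_singleton]
  · simp only [hmiss_empty, hT.ne_empty, if_false] at hsplit
    simp only [hT, true_and]
    split_ifs at hsplit ⊢ <;> omega

lemma one_add_Fweight {d : ℕ} {α : ℝ} (hα : 1 + α ≠ 0) (S : Set (Pt d)) (ω : ℕ → Pt d)
    (J : Finset ℕ) :
    1 + Fweight α S ω J = if ∀ j ∈ J, ω j ∈ S then (1 + α) ^ (-(-1) ^ #J : ℤ) else 1 := by
  unfold Fweight
  rw [prod_boole]
  split_ifs with hodd hJ hJ
  · simp [hodd.neg_one_pow]
  · simp
  · rw [(Nat.not_odd_iff_even.mp hodd).neg_one_pow]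
    field_simp
    ring
  · simp

lemma Finset.filter_forall_filter_exists_powerset_erase_empty {ι : Type*} [DecidableEq ι]
    (s : Finset ι) (p q : ι → Prop) [DecidablePred p] [DecidablePred q] :
    ((s.powerset.erase ∅).filter (fun J => ∃ j ∈ J, p j)).filter (fun J => ∀ j ∈ J, q j)
      = (s.filter q).powerset.filter (fun J => ∃ j ∈ J, p j) := by
  ext J
  simp only [mem_filter, mem_erase, mem_powerset, subset_iff]
  constructor
  · rintro ⟨⟨⟨-, hJs⟩, hp⟩, hq⟩
    exact ⟨fun j hj => ⟨hJs hj, hq j hj⟩, hp⟩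
  · rintro ⟨hJ, ⟨j, hj, hpj⟩⟩
    exact ⟨⟨⟨ne_empty_of_mem hj, fun i hi => (hJ hi).1⟩, j, hj, hpj⟩, fun i hi => (hJ hi).2⟩

theorem hypergraph_representation_remainder_general {d : ℕ} (n k : ℕ)
    (α : ℝ) (hα' : 1 + α ≠ 0) (S : Set (Pt d)) (ω : ℕ → Pt d) :
    (if (∀ j < k, ω j ∉ S) ∧ (∃ j, k ≤ j ∧ j ≤ n ∧ ω j ∈ S) then 1 + α else 1)
      = ∏ J ∈ ((Finset.range (n + 1)).powerset.erase ∅).filter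
            (fun J => ∃ j ∈ J, k ≤ j), (1 + Fweight α S ω J) := by
  set T := (range (n + 1)).filter (fun j => ω j ∈ S)
  have hcond : ((∀ j < k, ω j ∉ S) ∧ (∃ j, k ≤ j ∧ j ≤ n ∧ ω j ∈ S))
      ↔ T.Nonempty ∧ ∀ j ∈ T, k ≤ j := by
    simp only [T, Finset.Nonempty, mem_filter, mem_range, Nat.lt_succ_iff]
    constructor
    · rintro ⟨hbelow, j, hkj, hjn, hj⟩
      exact ⟨⟨j, hjn, hj⟩, fun i ⟨_, hi⟩ => not_lt.mp fun hik => hbelow i hik hi⟩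
    · rintro ⟨⟨j, hjn, hj⟩, habove⟩
      have hkj := habove j ⟨hjn, hj⟩
      exact ⟨fun i hik hi => absurd (habove i ⟨by omega, hi⟩) (not_le.mpr hik), j, hkj, hjn, hj⟩
  rw [prod_congr rfl fun J _ => one_add_Fweight hα' S ω J, ← prod_filter,
    filter_forall_filter_exists_powerset_erase_empty, prod_zpow_eq_zpow_sum₀ hα',
    sum_neg_distrib, sum_powerset_filter_exists_neg_one_pow_card]
  by_cases h : T.Nonempty ∧ ∀ j ∈ T, k ≤ j
  · rw [if_pos h, if_pos (hcond.mpr h), neg_neg, zpow_one]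
  · rw [if_neg h, if_neg (mt hcond.mp h), neg_zero, zpow_zero]

/-- **Remainder form of the hypergraph representation.**
For `α ≠ −1` (equivalently `1 + α ≠ 0`), `S ⊆ ℤ^d`, `0 ≤ k ≤ n` and a finite sequence
`ω_0, …, ω_n` of points of `ℤ^d`,
`(1+α)^{1[{ω_0,…,ω_{k−1}} ∩ S = ∅]·1[{ω_k,…,ω_n} ∩ S ≠ ∅]}
  = ∏_{J ⊆ {0,…,n}, |J| ≥ 1, J ∩ {k,…,n} ≠ ∅} (1 + F_J)`. -/
theorem hypergraph_representation_remainder {d : ℕ} (n k : ℕ) (hk : k ≤ n)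
    (α : ℝ) (hα : α ≠ -1) (hα' : 1 + α ≠ 0) (S : Set (Pt d)) (ω : ℕ → Pt d) :
    (if (∀ j < k, ω j ∉ S) ∧ (∃ j, k ≤ j ∧ j ≤ n ∧ ω j ∈ S) then 1 + α else 1)
      = ∏ J ∈ ((Finset.range (n + 1)).powerset.erase ∅).filter
            (fun J => ∃ j ∈ J, k ≤ j), (1 + Fweight α S ω J) :=
  hypergraph_representation_remainder_general n k α hα' S ω
end
end

section
/- Returns identity for closed λ-LWW: let λ = (λ_η) be nonnegative loop activities, z ≥ 0, and x ∈ ℤ^d. Let α₀(λ,z) = Σ_{walks ω from x to x} w_{λ,z}(ω) (including the zero-step walk), and assume α₀(λ,z) < ∞. Then Σ_{walks ω from x to x with |ω| ≥ 1} #{ j ∈ {1,…,|ω|} : ω_j = x }·w_{λ,z}(ω) = α₀(λ,z)·(α₀(λ,z) − 1). -/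
open scoped ENNReal NNReal BigOperators Classical

noncomputable section

namespace LWW

/-- A point of the lattice ℤ^d. -/
abbrev Pt (d : ℕ) := Fin d → ℤ

/-- ℓ¹ distance on ℤ^d. -/
def dist1 {d : ℕ} (x y : Pt d) : ℕ := ∑ i, (x i - y i).natAbs

/-- Nearest-neighbour adjacency on ℤ^d. -/
def Adj {d : ℕ} (x y : Pt d) : Prop := dist1 x y = 1

/-- Auxiliary function for single loop erasure: scan the list, keeping the
self-avoiding prefix `pre`; when the first repeated vertex is met, return the
loop-erased list together with the removed loop. -/
def le1Aux {α : Type*} [DecidableEq α] : List α → List α → List α × Option (List α)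
  | pre, [] => (pre, none)
  | pre, x :: rest =>
    if x ∈ pre then
      (pre.takeWhile (fun y => y ≠ x) ++ x :: rest,
        some (pre.dropWhile (fun y => y ≠ x) ++ [x]))
    else le1Aux (pre ++ [x]) rest

/-- Single loop erasure LE¹. -/
def LE1 {α : Type*} [DecidableEq α] (l : List α) : List α := (le1Aux [] l).1

/-- The loop removed by a single loop erasure (if the list is not self-avoiding). -/
def removedLoop {α : Type*} [DecidableEq α] (l : List α) : Option (List α) := (le1Aux [] l).2

/-- Iterate single loop erasure (with fuel), collecting the multiset of removed loops. -/
def leAux {α : Type*} [DecidableEq α] : ℕ → List α → List α × Multiset (List α)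
  | 0, l => (l, 0)
  | n + 1, l =>
    match le1Aux ([] : List α) l with
    | (_, none) => (l, 0)
    | (l', some c) => ((leAux n l').1, c ::ₘ (leAux n l').2)

/-- Loop erasure LE. -/
def LE {α : Type*} [DecidableEq α] (l : List α) : List α := (leAux l.length l).1

/-- The multiset of loops removed by loop erasure. -/
def erasedLoops {α : Type*} [DecidableEq α] (l : List α) : Multiset (List α) :=
  (leAux l.length l).2

/-- The number of loops removed by loop erasure. -/
def nLoops {α : Type*} [DecidableEq α] (l : List α) : ℕ := Multiset.card (erasedLoops l)

/-- A (finite) nearest-neighbour walk on ℤ^d, recorded as its (nonempty) list of vertices. -/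
structure Walk (d : ℕ) where
  pts : List (Pt d)
  ne : pts ≠ []
  chain : pts.Chain' Adj

namespace Walk

variable {d : ℕ}

/-- The number of steps of a walk. -/
def len (ω : Walk d) : ℕ := ω.pts.length - 1

/-- The initial vertex of a walk. -/
def start (ω : Walk d) : Pt d := ω.pts.headI

/-- The final vertex of a walk. -/
def finish (ω : Walk d) : Pt d := ω.pts.getLastD default

/-- The range (set of visited vertices) of a walk. -/
def range (ω : Walk d) : Set (Pt d) := {x | x ∈ ω.pts}

/-- The `i`-th vertex of a walk. -/
def nth (ω : Walk d) (i : ℕ) : Pt d := ω.pts.getD i default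

/-- A walk is a loop if it has at least one step and ends where it began. -/
def IsLoop (ω : Walk d) : Prop := 1 ≤ ω.len ∧ ω.finish = ω.start

end Walk

/-- The list of vertices of a self-avoiding polygon: a closed nearest-neighbour
walk all of whose vertices are distinct except that the last equals the first. -/
def IsSAPList {d : ℕ} (l : List (Pt d)) : Prop :=
  l.Chain' Adj ∧ 3 ≤ l.length ∧ l.getLastD default = l.headI ∧ l.dropLast.Nodup

/-- Change the initial vertex of a polygon list by a cyclic rotation. -/
def polyRot {d : ℕ} (l : List (Pt d)) (r : ℕ) : List (Pt d) :=
  l.dropLast.rotate r ++ [(l.dropLast.rotate r).headI]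

/-- An isometry of the lattice ℤ^d: a bijection preserving ℓ¹ distance. -/
def IsLatticeIso {d : ℕ} (R : Pt d ≃ Pt d) : Prop :=
  ∀ x y : Pt d, dist1 (R x) (R y) = dist1 x y

/-- The symmetry assumption on the loop activities: invariance under isometries of ℤ^d
and under change of initial vertex and of orientation of the polygon. -/
def SymmAssumption {d : ℕ} (lam : List (Pt d) → ℝ≥0) : Prop :=
  (∀ R : Pt d ≃ Pt d, IsLatticeIso R → ∀ l : List (Pt d), IsSAPList l →
      lam (l.map R) = lam l) ∧
  (∀ l : List (Pt d), IsSAPList l → ∀ r : ℕ, lam (polyRot l r) = lam l) ∧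
  (∀ l : List (Pt d), IsSAPList l → lam l.reverse = lam l)

/-- The boundedness assumption: sup over self-avoiding polygons of the activity is finite. -/
def BoundedAssumption {d : ℕ} (lam : List (Pt d) → ℝ≥0) : Prop :=
  ∃ M : ℝ≥0, ∀ l : List (Pt d), IsSAPList l → lam l ≤ M

/-- The product of the loop activities over the loops erased from `ω`, i.e. λ^{n_L(ω)}. -/
def wt0 {d : ℕ} (lam : List (Pt d) → ℝ≥0) (ω : Walk d) : ℝ≥0∞ :=
  ((erasedLoops ω.pts).map (fun η => (lam η : ℝ≥0∞))).prod

/-- The λ-LWW weight w_{λ,z}(ω) = z^{|ω|} λ^{n_L(ω)}. -/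
def wt {d : ℕ} (lam : List (Pt d) → ℝ≥0) (z : ℝ≥0) (ω : Walk d) : ℝ≥0∞ :=
  (z : ℝ≥0∞) ^ ω.len * wt0 lam ω

/-- The λ-LWW two-point function. -/
def G {d : ℕ} (lam : List (Pt d) → ℝ≥0) (z : ℝ≥0) (x y : Pt d) : ℝ≥0∞ :=
  ∑' ω : Walk d, if ω.start = x ∧ ω.finish = y then wt lam z ω else 0

/-- The λ-LWW loop measure μ_{λ,z}(A;B). -/
def mu {d : ℕ} (lam : List (Pt d) → ℝ≥0) (z : ℝ≥0) (A B : Set (Pt d)) : ℝ≥0∞ :=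
  ∑' ω : Walk d,
    if ω.IsLoop ∧ (ω.range ∩ A).Nonempty ∧ ω.range ∩ B = ∅
    then wt lam z ω / (ω.len : ℝ≥0∞) else 0

/-- The generalized λ-LWW loop measure μ_{λ,z}(A,B;C) with two hitting sets. -/
def mu2 {d : ℕ} (lam : List (Pt d) → ℝ≥0) (z : ℝ≥0) (A B C : Set (Pt d)) : ℝ≥0∞ :=
  ∑' ω : Walk d,
    if ω.IsLoop ∧ (ω.range ∩ A).Nonempty ∧ (ω.range ∩ B).Nonempty ∧ ω.range ∩ C = ∅
    then wt lam z ω / (ω.len : ℝ≥0∞) else 0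

/-- exp : [0,∞] → [0,∞] with exp(∞) = ∞. -/
def eexp (x : ℝ≥0∞) : ℝ≥0∞ := if x = ⊤ then ⊤ else ENNReal.ofReal (Real.exp x.toReal)

/-- The loop-erased λ-LWW weight w̄_{λ,z}(η) of a self-avoiding walk η. -/
def wbar {d : ℕ} (lam : List (Pt d) → ℝ≥0) (z : ℝ≥0) (η : Walk d) : ℝ≥0∞ :=
  ∑' ω : Walk d, if LE ω.pts = η.pts then wt lam z ω else 0

/-- c_n^λ : the total λ-LWW mass of n-step walks started at the origin. -/
def cN {d : ℕ} (lam : List (Pt d) → ℝ≥0) (n : ℕ) : ℝ≥0∞ :=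
  ∑' ω : Walk d, if ω.start = 0 ∧ ω.len = n then wt0 lam ω else 0

/-- The susceptibility χ_λ(z) = Σ_n c_n^λ z^n. -/
def chi {d : ℕ} (lam : List (Pt d) → ℝ≥0) (z : ℝ) : ℝ≥0∞ :=
  ∑' n : ℕ, cN lam n * ENNReal.ofReal z ^ n

/-- The critical point z_c(λ): the radius of convergence of the susceptibility
(for a power series with nonnegative coefficients this is the supremum of the
set of nonnegative z at which the series converges). -/
def zc {d : ℕ} (lam : List (Pt d) → ℝ≥0) : ℝ :=
  sSup {z : ℝ | 0 ≤ z ∧ chi lam z < ⊤}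


/-- `α₀(λ,z)` based at `x`: the total λ-LWW weight of closed walks at `x`
(including the zero-step walk). -/
def alpha0At {d : ℕ} (lam : List (Pt d) → ℝ≥0) (z : ℝ≥0) (x : Pt d) : ℝ≥0∞ :=
  ∑' ω : Walk d, if ω.start = x ∧ ω.finish = x then wt lam z ω else 0


/-!
Cutting a closed walk at `x` at one of its visits to `x` (times `0` and `|ω|` included) gives
a pair of closed walks at `x`, and every pair arises exactly once, as the two halves of its
concatenation. Loop erasure of `ω₁ω₂` with `ω₁` closed erases the loops of `ω₁` and then those
of `ω₂`, so `w(ω₁ω₂) = w(ω₁) w(ω₂)`. Hence `α₀² = Σ_ω (1 + #returns(ω)) w(ω)`, summed over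
closed walks at `x`, which is `α₀` plus the left-hand side; as `α₀ < ∞` it can be cancelled.
-/

section LoopErasure

variable {α : Type*} [DecidableEq α]

theorem nodup_append_of_le1Aux_eq_none {pre l p : List α} (hpre : pre.Nodup)
    (h : le1Aux pre l = (p, none)) : (pre ++ l).Nodup := by
  induction l generalizing pre with
  | nil => simpa using hpre
  | cons a rest ih =>
    rw [le1Aux] at h
    by_cases ha : a ∈ pre
    · simp [ha] at h
    · rw [if_neg ha] at h
      simpa using ih (List.nodup_append.2 ⟨hpre, List.nodup_singleton a,
        fun b hb c hc => by rintro rfl; exact ha (by simp_all)⟩) h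

theorem le1Aux_eq_some_spec {pre l p c : List α} (h : le1Aux pre l = (p, some c)) :
    p.head? = (pre ++ l).head? ∧ p.getLast? = (pre ++ l).getLast? ∧
      p.length < pre.length + l.length := by
  induction l generalizing pre with
  | nil => simp [le1Aux] at h
  | cons a rest ih =>
    rw [le1Aux] at h
    by_cases ha : a ∈ pre
    · rw [if_pos ha, Prod.mk.injEq] at h
      obtain ⟨rfl, -⟩ := h
      have hsplit := List.takeWhile_append_dropWhile (p := fun y => decide (y ≠ a)) (l := pre)
      have hdrop : pre.dropWhile (fun y => y ≠ a) ≠ [] := by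
        rw [Ne, List.dropWhile_eq_nil_iff]
        exact fun hall => by simpa using hall a ha
      refine ⟨?_, by rw [List.getLast?_append_cons, List.getLast?_append_cons], ?_⟩
      · rcases pre with _ | ⟨b, pre'⟩
        · simp at ha
        · by_cases hb : b = a <;> simp [hb]
      · have := congrArg List.length hsplit
        have := List.length_pos_iff.2 hdrop
        simp only [List.length_append, List.length_cons] at *
        omega
    · rw [if_neg ha] at h
      obtain ⟨hhead, hlast, hlen⟩ := ih h
      simp only [List.append_assoc, List.singleton_append, List.length_append,
        List.length_cons, List.length_nil] at hhead hlast hlen ⊢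
      exact ⟨hhead, hlast, by omega⟩

theorem le1Aux_append_of_eq_some {pre l p c : List α} (t : List α)
    (h : le1Aux pre l = (p, some c)) : le1Aux pre (l ++ t) = (p ++ t, some c) := by
  induction l generalizing pre with
  | nil => simp [le1Aux] at h
  | cons a rest ih =>
    rw [le1Aux] at h
    rw [List.cons_append, le1Aux]
    by_cases ha : a ∈ pre
    · simp only [if_pos ha, Prod.mk.injEq, Option.some.injEq] at h
      obtain ⟨rfl, rfl⟩ := h
      simp [ha]
    · rw [if_neg ha] at h ⊢
      exact ih h

theorem leAux_of_le1Aux_eq_none {l p : List α} (h : le1Aux [] l = (p, none)) (n : ℕ) :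
    leAux n l = (l, 0) := by
  cases n <;> simp [leAux, h]

theorem leAux_succ_of_le1Aux_eq_some {l p c : List α} (h : le1Aux [] l = (p, some c)) (n : ℕ) :
    leAux (n + 1) l = ((leAux n p).1, c ::ₘ (leAux n p).2) := by
  rw [leAux, h]

theorem leAux_eq_leAux {n m : ℕ} {l : List α} (hn : l.length ≤ n) (hm : l.length ≤ m) :
    leAux n l = leAux m l := by
  induction n generalizing m l with
  | zero =>
    obtain rfl : l = [] := List.length_eq_zero_iff.1 (Nat.le_zero.1 hn)
    rw [leAux_of_le1Aux_eq_none (p := []) rfl, leAux_of_le1Aux_eq_none (p := []) rfl]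
  | succ n ih =>
    rcases h : le1Aux [] l with ⟨p, _ | c⟩
    · rw [leAux_of_le1Aux_eq_none h, leAux_of_le1Aux_eq_none h]
    · have hp : p.length < l.length := by simpa using (le1Aux_eq_some_spec h).2.2
      obtain ⟨m, rfl⟩ : ∃ m', m = m' + 1 := ⟨m - 1, by omega⟩
      rw [leAux_succ_of_le1Aux_eq_some h, leAux_succ_of_le1Aux_eq_some h,
        ih (m := m) (l := p) (by omega) (by omega)]

theorem erasedLoops_of_le1Aux_eq_none {l p : List α} (h : le1Aux [] l = (p, none)) :
    erasedLoops l = 0 := by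
  rw [erasedLoops, leAux_of_le1Aux_eq_none h]

theorem erasedLoops_of_le1Aux_eq_some {l p c : List α} (h : le1Aux [] l = (p, some c)) :
    erasedLoops l = c ::ₘ erasedLoops p := by
  have hp : p.length < l.length := by simpa using (le1Aux_eq_some_spec h).2.2
  obtain ⟨k, hk⟩ : ∃ k, l.length = k + 1 := ⟨l.length - 1, by omega⟩
  rw [erasedLoops, erasedLoops, hk, leAux_succ_of_le1Aux_eq_some h,
    leAux_eq_leAux (by omega) le_rfl]

/-- While `l` is not self-avoiding, the first loop of `l ++ t` lies inside `l`; and a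
self-avoiding `l` that is closed at `x` is `[x]`. -/
theorem erasedLoops_append_of_closed {x : α} {l : List α} (hhead : l.head? = some x)
    (hlast : l.getLast? = some x) (t : List α) :
    erasedLoops (l ++ t) = erasedLoops l + erasedLoops (x :: t) := by
  induction hn : l.length using Nat.strong_induction_on generalizing l with
  | _ n ih =>
  rcases h : le1Aux [] l with ⟨p, _ | c⟩
  · have hnd : l.Nodup := by simpa using nodup_append_of_le1Aux_eq_none List.nodup_nil h
    obtain rfl : l = [x] := by
      rcases l with _ | ⟨a, _ | ⟨b, l'⟩⟩
      · simp at hhead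
      · simpa using hhead
      · simp only [List.head?_cons, Option.some.injEq] at hhead
        subst hhead
        exact absurd (List.mem_of_getLast? (by simpa using hlast)) (List.nodup_cons.1 hnd).1
    simp [erasedLoops_of_le1Aux_eq_none h]
  · obtain ⟨hph, hpl, hplen⟩ := le1Aux_eq_some_spec h
    simp only [List.nil_append, List.length_nil, zero_add] at hph hpl hplen
    rw [erasedLoops_of_le1Aux_eq_some (by simpa using le1Aux_append_of_eq_some t h),
      ih p.length (hn ▸ hplen) (hph.trans hhead) (hpl.trans hlast) rfl,
      erasedLoops_of_le1Aux_eq_some h, Multiset.cons_add]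

end LoopErasure

namespace Walk

variable {d : ℕ}

theorem ext_pts {ω ω' : Walk d} (h : ω.pts = ω'.pts) : ω = ω' := by
  cases ω; cases ω'; simpa using h

theorem length_pts (ω : Walk d) : ω.pts.length = ω.len + 1 := by
  have := List.length_pos_iff.2 ω.ne
  rw [len]
  omega

theorem head?_pts (ω : Walk d) : ω.pts.head? = some ω.start := by
  rcases h : ω.pts with _ | ⟨a, l⟩
  · exact absurd h ω.ne
  · simp [start, h]

theorem getLast?_pts (ω : Walk d) : ω.pts.getLast? = some ω.finish := by
  simp [finish, List.getLastD_eq_getLast?, List.getLast?_eq_some_getLast ω.ne]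

theorem getElem?_pts_of_le (ω : Walk d) {j : ℕ} (hj : j ≤ ω.len) :
    ω.pts[j]? = some (ω.nth j) := by
  rw [nth, List.getD_eq_getElem?_getD, List.getElem?_eq_getElem (by rw [length_pts]; omega)]
  rfl

theorem nth_zero (ω : Walk d) : ω.nth 0 = ω.start :=
  Option.some_injective _ <| by
    rw [← ω.getElem?_pts_of_le (Nat.zero_le _), ← List.head?_eq_getElem?, head?_pts]

theorem start_cons_tail_pts (ω : Walk d) : ω.start :: ω.pts.tail = ω.pts :=
  List.cons_head?_tail ω.head?_pts

def take (ω : Walk d) (j : ℕ) : Walk d :=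
  ⟨ω.pts.take (j + 1), by simp [ω.ne], ω.chain.take _⟩

/-- Junk for `ω.len < j`: the truncation at `min j ω.len` keeps the walk nonempty. -/
def drop (ω : Walk d) (j : ℕ) : Walk d :=
  ⟨ω.pts.drop (min j ω.len), by simp [length_pts], ω.chain.drop _⟩

theorem take_pts (ω : Walk d) (j : ℕ) : (ω.take j).pts = ω.pts.take (j + 1) := rfl

theorem drop_pts (ω : Walk d) (j : ℕ) : (ω.drop j).pts = ω.pts.drop (min j ω.len) := rfl

def append (ω₁ ω₂ : Walk d) (h : ω₁.finish = ω₂.start) : Walk d :=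
  ⟨ω₁.pts ++ ω₂.pts.tail, by simp [ω₁.ne], by
    have hjoin : List.IsChain Adj (ω₂.start :: ω₂.pts.tail) := ω₂.start_cons_tail_pts ▸ ω₂.chain
    rw [List.isChain_cons] at hjoin
    refine List.isChain_append.2 ⟨ω₁.chain, hjoin.2, ?_⟩
    simpa [getLast?_pts, h] using hjoin.1⟩

theorem append_pts (ω₁ ω₂ : Walk d) (h : ω₁.finish = ω₂.start) :
    (ω₁.append ω₂ h).pts = ω₁.pts ++ ω₂.pts.tail := rfl

variable {ω : Walk d} {j : ℕ}

theorem take_len (hj : j ≤ ω.len) : (ω.take j).len = j := by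
  have := (ω.take j).length_pts
  rw [take_pts, List.length_take, length_pts] at this
  omega

theorem drop_len (hj : j ≤ ω.len) : (ω.drop j).len = ω.len - j := by
  have := (ω.drop j).length_pts
  rw [drop_pts, List.length_drop, length_pts] at this
  omega

theorem take_start : (ω.take j).start = ω.start :=
  Option.some_injective _ <|
    (ω.take j).head?_pts.symm.trans (by simp [take_pts, List.head?_take, ← head?_pts])

theorem take_finish (hj : j ≤ ω.len) : (ω.take j).finish = ω.nth j := by
  refine Option.some_injective _ <| (ω.take j).getLast?_pts.symm.trans ?_
  rw [List.getLast?_eq_getElem?, (ω.take j).length_pts, take_len hj, ← ω.getElem?_pts_of_le hj]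
  simp [take_pts]

theorem drop_start (hj : j ≤ ω.len) : (ω.drop j).start = ω.nth j := by
  refine Option.some_injective _ <| (ω.drop j).head?_pts.symm.trans ?_
  rw [← ω.getElem?_pts_of_le hj]
  simp [drop_pts, min_eq_left hj]

theorem drop_finish : (ω.drop j).finish = ω.finish := by
  refine Option.some_injective _ <| (ω.drop j).getLast?_pts.symm.trans ?_
  rw [← getLast?_pts]
  simp [drop_pts, List.getLast?_drop, length_pts]

theorem pts_eq_take_append_drop (hj : j ≤ ω.len) :
    ω.pts = (ω.take j).pts ++ (ω.drop j).pts.tail := by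
  simp [take_pts, drop_pts, min_eq_left hj, List.tail_drop]

theorem eq_of_take_eq_of_drop_eq {ω' : Walk d} {j' : ℕ} (hj : j ≤ ω.len) (hj' : j' ≤ ω'.len)
    (htake : ω.take j = ω'.take j') (hdrop : ω.drop j = ω'.drop j') : ω = ω' ∧ j = j' := by
  have hjj' : j = j' := by rw [← take_len hj, ← take_len hj', htake]
  subst hjj'
  refine ⟨ext_pts ?_, rfl⟩
  rw [pts_eq_take_append_drop hj, pts_eq_take_append_drop hj', htake, hdrop]

def visitTimes (ω : Walk d) (x : Pt d) : Finset ℕ :=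
  (Finset.Icc 0 ω.len).filter (fun j => ω.nth j = x)

theorem mem_visitTimes {x : Pt d} : j ∈ ω.visitTimes x ↔ j ≤ ω.len ∧ ω.nth j = x := by
  simp [visitTimes]

theorem card_visitTimes (ω : Walk d) {x : Pt d} (hx : ω.start = x) :
    (ω.visitTimes x).card = ((Finset.Icc 1 ω.len).filter (fun j => ω.nth j = x)).card + 1 := by
  rw [visitTimes, ← Finset.insert_Icc_add_one_left_eq_Icc (Nat.zero_le _), Finset.filter_insert,
    if_pos (ω.nth_zero.trans hx), Finset.card_insert_of_notMem (by simp), zero_add]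

variable {ω₁ ω₂ : Walk d} (h : ω₁.finish = ω₂.start)

theorem append_len : (ω₁.append ω₂ h).len = ω₁.len + ω₂.len := by
  have := (ω₁.append ω₂ h).length_pts
  rw [append_pts, List.length_append, List.length_tail, length_pts, length_pts] at this
  omega

theorem take_append : (ω₁.append ω₂ h).take ω₁.len = ω₁ :=
  ext_pts <| by simp [take_pts, append_pts, length_pts]

theorem drop_append : (ω₁.append ω₂ h).drop ω₁.len = ω₂ := by
  have hlast : ω₁.pts.drop ω₁.len = [ω₂.start] := by
    rw [← h, len, List.drop_length_sub_one ω₁.ne]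
    simp [finish, List.getLastD_eq_getLast?, List.getLast?_eq_some_getLast ω₁.ne]
  refine ext_pts ?_
  rw [drop_pts, append_len, min_eq_left (by omega), append_pts,
    List.drop_append_of_le_length (by rw [length_pts]; omega), hlast, List.singleton_append,
    start_cons_tail_pts]

theorem len_mem_visitTimes_append : ω₁.len ∈ (ω₁.append ω₂ h).visitTimes ω₁.finish := by
  have hle : ω₁.len ≤ (ω₁.append ω₂ h).len := by rw [append_len]; omega
  refine mem_visitTimes.2 ⟨hle, ?_⟩
  rw [← take_finish hle, take_append]

end Walk

section Returns

variable {d : ℕ} (lam : List (Pt d) → ℝ≥0) (z : ℝ≥0)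

theorem wt_eq_mul_take_drop {ω : Walk d} {j : ℕ} (hj : j ≤ ω.len) (hclosed : ω.nth j = ω.start) :
    wt lam z ω = wt lam z (ω.take j) * wt lam z (ω.drop j) := by
  have hloops : erasedLoops ω.pts = erasedLoops (ω.take j).pts + erasedLoops (ω.drop j).pts := by
    rw [ω.pts_eq_take_append_drop hj, erasedLoops_append_of_closed (x := ω.start)
      (by rw [Walk.head?_pts, Walk.take_start])
      (by rw [Walk.getLast?_pts, Walk.take_finish hj, hclosed]),
      ← hclosed, ← Walk.drop_start hj, Walk.start_cons_tail_pts]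
  rw [wt, wt, wt, wt0, wt0, wt0, hloops, Multiset.map_add, Multiset.prod_add, Walk.take_len hj,
    Walk.drop_len hj, mul_mul_mul_comm, ← pow_add, Nat.add_sub_cancel' hj]

variable (x : Pt d)

def closedWt (ω : Walk d) : ℝ≥0∞ := if ω.start = x ∧ ω.finish = x then wt lam z ω else 0

variable {lam z x}

theorem alpha0At_eq_tsum_closedWt : alpha0At lam z x = ∑' ω : Walk d, closedWt lam z x ω := rfl

theorem closedWt_take_mul_closedWt_drop {ω : Walk d} {j : ℕ} (hj : j ∈ ω.visitTimes x) :
    closedWt lam z x (ω.take j) * closedWt lam z x (ω.drop j) = closedWt lam z x ω := by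
  obtain ⟨hjlen, hjx⟩ := Walk.mem_visitTimes.1 hj
  simp only [closedWt, Walk.take_start, Walk.take_finish hjlen, Walk.drop_start hjlen,
    Walk.drop_finish, hjx, and_true, true_and]
  by_cases hs : ω.start = x
  · by_cases hf : ω.finish = x
    · rw [if_pos hs, if_pos hf, if_pos ⟨hs, hf⟩,
        wt_eq_mul_take_drop lam z hjlen (hjx.trans hs.symm)]
    · simp [hf]
  · simp [hs]

theorem closed_of_closedWt_ne_zero {ω : Walk d} (hω : closedWt lam z x ω ≠ 0) :
    ω.start = x ∧ ω.finish = x := by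
  by_contra hc
  exact hω (if_neg hc)

theorem tsum_closedWt_mul_closedWt :
    ∑' p : Walk d × Walk d, closedWt lam z x p.1 * closedWt lam z x p.2
      = ∑' q : Walk d × ℕ, if q.2 ∈ q.1.visitTimes x then closedWt lam z x q.1 else 0 := by
  have mem_of_ne_zero : ∀ q : Walk d × ℕ,
      (if q.2 ∈ q.1.visitTimes x then closedWt lam z x q.1 else 0) ≠ 0 → q.2 ∈ q.1.visitTimes x :=
    fun q hq => by by_contra hc; exact hq (if_neg hc)
  refine tsum_eq_tsum_of_ne_zero_bij (fun q => (q.1.1.take q.1.2, q.1.1.drop q.1.2)) ?_ ?_ ?_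
  · rintro ⟨⟨ω, j⟩, hq⟩ ⟨⟨ω', j'⟩, hq'⟩ hsplit
    obtain ⟨hj, -⟩ := Walk.mem_visitTimes.1 (mem_of_ne_zero _ hq)
    obtain ⟨hj', -⟩ := Walk.mem_visitTimes.1 (mem_of_ne_zero _ hq')
    simp only [Prod.mk.injEq] at hsplit
    obtain ⟨rfl, rfl⟩ := Walk.eq_of_take_eq_of_drop_eq hj hj' hsplit.1 hsplit.2
    rfl
  · rintro ⟨ω₁, ω₂⟩ hp
    have hp' : closedWt lam z x ω₁ * closedWt lam z x ω₂ ≠ 0 := hp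
    obtain ⟨hs₁, hf₁⟩ := closed_of_closedWt_ne_zero (left_ne_zero_of_mul hp')
    obtain ⟨hs₂, -⟩ := closed_of_closedWt_ne_zero (right_ne_zero_of_mul hp')
    have h : ω₁.finish = ω₂.start := hf₁.trans hs₂.symm
    have hmem : ω₁.len ∈ (ω₁.append ω₂ h).visitTimes x := hf₁ ▸ Walk.len_mem_visitTimes_append h
    refine ⟨⟨(ω₁.append ω₂ h, ω₁.len), ?_⟩, ?_⟩
    · rw [Function.mem_support, if_pos hmem, ← closedWt_take_mul_closedWt_drop hmem,
        Walk.take_append, Walk.drop_append]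
      exact hp'
    · simp only [Walk.take_append, Walk.drop_append]
  · rintro ⟨⟨ω, j⟩, hq⟩
    rw [if_pos (mem_of_ne_zero _ hq)]
    exact closedWt_take_mul_closedWt_drop (mem_of_ne_zero _ hq)

theorem alpha0At_mul_self :
    alpha0At lam z x * alpha0At lam z x
      = ∑' ω : Walk d, ((ω.visitTimes x).card : ℝ≥0∞) * closedWt lam z x ω := by
  calc alpha0At lam z x * alpha0At lam z x
      = ∑' p : Walk d × Walk d, closedWt lam z x p.1 * closedWt lam z x p.2 := by
        rw [alpha0At_eq_tsum_closedWt, ← ENNReal.tsum_mul_right, ENNReal.tsum_prod']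
        simp only [← ENNReal.tsum_mul_left]
    _ = ∑' q : Walk d × ℕ, if q.2 ∈ q.1.visitTimes x then closedWt lam z x q.1 else 0 :=
        tsum_closedWt_mul_closedWt
    _ = _ := by
        rw [ENNReal.tsum_prod']
        congr 1
        funext ω
        rw [tsum_eq_sum (s := ω.visitTimes x) (fun j hj => if_neg hj)]
        simp

theorem card_visitTimes_mul_closedWt (ω : Walk d) :
    ((ω.visitTimes x).card : ℝ≥0∞) * closedWt lam z x ω
      = (if ω.start = x ∧ ω.finish = x ∧ 1 ≤ ω.len
          then (((Finset.Icc 1 ω.len).filter (fun j => ω.nth j = x)).card : ℝ≥0∞) * wt lam z ω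
          else 0) + closedWt lam z x ω := by
  by_cases hc : ω.start = x ∧ ω.finish = x
  · rw [closedWt, if_pos hc, ω.card_visitTimes hc.1, Nat.cast_add_one, add_mul, one_mul]
    by_cases hl : 1 ≤ ω.len
    · rw [if_pos ⟨hc.1, hc.2, hl⟩]
    · rw [if_neg (by tauto), show ω.len = 0 by omega]
      simp
  · rw [closedWt, if_neg hc, if_neg (by tauto), mul_zero, add_zero]

end Returns

/-- **Returns identity for closed λ-LWW.**  Let `λ` be nonnegative loop activities,
`z ≥ 0` and `x ∈ ℤ^d`, and assume `α₀(λ,z) < ∞`.  Then the total weight of closed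
walks at `x`, each counted with multiplicity the number of returns
`#{j ∈ {1,…,|ω|} : ω_j = x}`, equals `α₀(λ,z)·(α₀(λ,z) − 1)`. -/
theorem returns_identity {d : ℕ} (lam : List (Pt d) → ℝ≥0) (z : ℝ≥0) (x : Pt d)
    (hfin : alpha0At lam z x < ⊤) :
    (∑' ω : Walk d,
        if ω.start = x ∧ ω.finish = x ∧ 1 ≤ ω.len
        then (((Finset.Icc 1 ω.len).filter (fun j => ω.nth j = x)).card : ℝ≥0∞)
              * wt lam z ω
        else 0)
      = alpha0At lam z x * (alpha0At lam z x - 1) := by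
  have hsquare := alpha0At_mul_self (lam := lam) (z := z) (x := x)
  simp only [card_visitTimes_mul_closedWt] at hsquare
  rw [ENNReal.tsum_add] at hsquare
  rw [ENNReal.mul_sub (fun _ _ => hfin.ne), mul_one]
  exact ENNReal.eq_sub_of_add_eq hfin.ne hsquare.symm

end LWW
end
end
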